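/- arXiv:1203.3560 — 6 statements merged into one kernel-verified Lean document; each statement's English description precedes it below -/
import Mathlib

section
/- Let p be a prime with p ≡ 1 (mod 3), let β ∈ F_p satisfy β² = −27, and let χ : F_p → ℂ be a multiplicative character of order 3 (extended by χ(0) = 0). Then the global character sum S = ∑_{z ∈ F_p, z ≠ 0} ∑_{(x,y) ∈ F_p × F_p with y² = x³ − 27z²} {x}·χ(y − βz) is a rational integer divisible by p; that is, there exists m ∈ ℤ with S = p·m. -/
open Finset

/-- Let `p ≡ 1 (mod 3)` be prime, `β² = -27` in `F_p`, and `χ` a multiplicative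
character of order 3 on `F_p` (valued in `ℂ`, extended by `χ 0 = 0`). Then the
global character sum over the elliptic surface `y² = x³ - 27z²` is a rational
integer divisible by `p`. -/
theorem global_sum_divisible_by_p
    (p : ℕ) [Fact p.Prime] (hp3 : p % 3 = 1)
    (β : ZMod p) (hβ : β ^ 2 = -27)
    (χ : MulChar (ZMod p) ℂ) (hχ : orderOf χ = 3) :
    ∃ m : ℤ,
      (∑ z ∈ univ.filter (fun z : ZMod p => z ≠ 0),
          ∑ P ∈ univ.filter
              (fun P : ZMod p × ZMod p => P.2 ^ 2 = P.1 ^ 3 - 27 * z ^ 2),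
            (P.1.val : ℂ) * χ (P.2 - β * z))
        = (p : ℂ) * (m : ℂ) := by
  have hp : p.Prime := Fact.out
  have hne2 : p ≠ 2 := by rintro rfl; norm_num at hp3
  have hne3 : p ≠ 3 := by rintro rfl; norm_num at hp3
  have h2 : (2 : ZMod p) ≠ 0 := by
    intro h
    have h' : ((2 : ℕ) : ZMod p) = 0 := by exact_mod_cast h
    exact hne2 ((Nat.prime_dvd_prime_iff_eq hp (by norm_num)).mp
      ((ZMod.natCast_eq_zero_iff 2 p).mp h'))
  have h3 : (3 : ZMod p) ≠ 0 := by
    intro h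
    have h' : ((3 : ℕ) : ZMod p) = 0 := by exact_mod_cast h
    exact hne3 ((Nat.prime_dvd_prime_iff_eq hp (by norm_num)).mp
      ((ZMod.natCast_eq_zero_iff 3 p).mp h'))
  have h27 : (27 : ZMod p) ≠ 0 := by
    have h : (27 : ZMod p) = 3 ^ 3 := by norm_num
    rw [h]
    exact pow_ne_zero _ h3
  have hβ0 : β ≠ 0 := by
    rintro rfl
    rw [zero_pow (by norm_num)] at hβ
    exact h27 (neg_eq_zero.mp hβ.symm)
  have hχ1 : χ ≠ 1 := by
    intro h
    rw [h, orderOf_one] at hχ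
    norm_num at hχ
  have hχ3 : χ ^ 3 = 1 := by rw [← hχ]; exact pow_orderOf_eq_one χ
  have hcube : ∀ w : ZMod p, w ≠ 0 → χ w ^ 3 = 1 := by
    intro w hw
    rw [← MulChar.pow_apply' χ (by norm_num) w, hχ3]
    exact MulChar.one_apply (isUnit_iff_ne_zero.mpr hw)
  have hχneg1 : χ (-1) = 1 := by
    have hsq : χ (-1) * χ (-1) = 1 := by
      rw [← map_mul]; norm_num
    have hc : χ (-1) ^ 3 = 1 := hcube (-1) (by
      intro h; exact one_ne_zero (neg_eq_zero.mp h))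
    calc χ (-1) = χ (-1) * (χ (-1) * χ (-1)) := by rw [hsq, mul_one]
      _ = χ (-1) ^ 3 := by ring
      _ = 1 := hc
  -- the change of variables (z, y) ↦ (u, v) = (y - βz, y + βz)
  have h2β : (2 : ZMod p) * β ≠ 0 := mul_ne_zero h2 hβ0
  let e : (ZMod p × ZMod p) ≃ (ZMod p × ZMod p) :=
    { toFun := fun q => (q.2 - β * q.1, q.2 + β * q.1)
      invFun := fun q => ((q.2 - q.1) / (2 * β), (q.1 + q.2) / 2)
      left_inv := by
        rintro ⟨z, y⟩
        refine Prod.ext ?_ ?_ <;> simp only <;> field_simp <;> ring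
      right_inv := by
        rintro ⟨u, v⟩
        refine Prod.ext ?_ ?_ <;> simp only <;> field_simp <;> ring }
  -- Step 1 : rewrite the global sum
  have step1 :
      (∑ z ∈ univ.filter (fun z : ZMod p => z ≠ 0),
          ∑ P ∈ univ.filter
              (fun P : ZMod p × ZMod p => P.2 ^ 2 = P.1 ^ 3 - 27 * z ^ 2),
            (P.1.val : ℂ) * χ (P.2 - β * z))
        = ∑ x : ZMod p, (x.val : ℂ) *
            ∑ u : ZMod p, ∑ v : ZMod p,
              (if u * v = x ^ 3 ∧ u ≠ v then χ u else 0) := by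
    simp only [Finset.sum_filter, Fintype.sum_prod_type]
    have e1 : ∀ z : ZMod p,
        (if z ≠ 0 then
            ∑ x : ZMod p, ∑ y : ZMod p,
              (if y ^ 2 = x ^ 3 - 27 * z ^ 2 then (x.val : ℂ) * χ (y - β * z) else 0)
          else 0)
        = ∑ x : ZMod p, ∑ y : ZMod p,
            (if z ≠ 0 ∧ y ^ 2 = x ^ 3 - 27 * z ^ 2 then (x.val : ℂ) * χ (y - β * z) else 0) := by
      intro z
      split_ifs with hz
      · exact Finset.sum_congr rfl fun x _ => Finset.sum_congr rfl fun y _ => by simp [hz]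
      · symm
        refine Finset.sum_eq_zero fun x _ => Finset.sum_eq_zero fun y _ => ?_
        simp [hz]
    rw [show (∑ z : ZMod p, if z ≠ 0 then
            ∑ x : ZMod p, ∑ y : ZMod p,
              (if y ^ 2 = x ^ 3 - 27 * z ^ 2 then (x.val : ℂ) * χ (y - β * z) else 0)
          else 0)
        = ∑ z : ZMod p, ∑ x : ZMod p, ∑ y : ZMod p,
            (if z ≠ 0 ∧ y ^ 2 = x ^ 3 - 27 * z ^ 2 then (x.val : ℂ) * χ (y - β * z) else 0)
      from Finset.sum_congr rfl fun z _ => e1 z]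
    rw [Finset.sum_comm]
    refine Finset.sum_congr rfl fun x _ => ?_
    have key : ∑ z : ZMod p, ∑ y : ZMod p,
        (if z ≠ 0 ∧ y ^ 2 = x ^ 3 - 27 * z ^ 2 then (x.val : ℂ) * χ (y - β * z) else 0)
        = ∑ u : ZMod p, ∑ v : ZMod p,
            (if u * v = x ^ 3 ∧ u ≠ v then (x.val : ℂ) * χ u else 0) := by
      calc ∑ z : ZMod p, ∑ y : ZMod p,
            (if z ≠ 0 ∧ y ^ 2 = x ^ 3 - 27 * z ^ 2 then (x.val : ℂ) * χ (y - β * z) else 0)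
          = ∑ q : ZMod p × ZMod p,
              (if q.1 ≠ 0 ∧ q.2 ^ 2 = x ^ 3 - 27 * q.1 ^ 2 then (x.val : ℂ) * χ (q.2 - β * q.1) else 0) :=
            (Fintype.sum_prod_type' (f := fun z y : ZMod p =>
              (if z ≠ 0 ∧ y ^ 2 = x ^ 3 - 27 * z ^ 2 then (x.val : ℂ) * χ (y - β * z) else 0))).symm
        _ = ∑ q : ZMod p × ZMod p,
              (if (e q).1 * (e q).2 = x ^ 3 ∧ (e q).1 ≠ (e q).2 then (x.val : ℂ) * χ (e q).1 else 0) := ?_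
        _ = ∑ q : ZMod p × ZMod p,
              (if q.1 * q.2 = x ^ 3 ∧ q.1 ≠ q.2 then (x.val : ℂ) * χ q.1 else 0) :=
            Equiv.sum_comp e (fun q : ZMod p × ZMod p =>
              (if q.1 * q.2 = x ^ 3 ∧ q.1 ≠ q.2 then (x.val : ℂ) * χ q.1 else 0))
        _ = ∑ u : ZMod p, ∑ v : ZMod p,
              (if u * v = x ^ 3 ∧ u ≠ v then (x.val : ℂ) * χ u else 0) :=
            Fintype.sum_prod_type' (f := fun u v : ZMod p =>
              (if u * v = x ^ 3 ∧ u ≠ v then (x.val : ℂ) * χ u else 0))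
      refine Fintype.sum_congr _ _ fun q => ?_
      obtain ⟨z, y⟩ := q
      simp only [e, Equiv.coe_fn_mk]
      refine if_congr ?_ rfl rfl
      constructor
      · rintro ⟨hz, hcond⟩
        refine ⟨by linear_combination hcond - z ^ 2 * hβ, ?_⟩
        intro h
        have hzz : (2 : ZMod p) * β * z = 0 := by linear_combination -h
        exact hz ((mul_eq_zero.mp hzz).resolve_left h2β)
      · rintro ⟨hcond, hne⟩
        have hz : z ≠ 0 := by
          rintro rfl
          exact hne (by ring)
        exact ⟨hz, by linear_combination hcond + z ^ 2 * hβ⟩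
    rw [key, Finset.mul_sum]
    refine Finset.sum_congr rfl fun u _ => ?_
    rw [Finset.mul_sum]
    refine Finset.sum_congr rfl fun v _ => ?_
    rw [mul_ite, mul_zero]
  -- Step 2 : evaluate the inner sum for x ≠ 0
  have inner_eval : ∀ x : ZMod p, x ≠ 0 →
      (∑ u : ZMod p, ∑ v : ZMod p, (if u * v = x ^ 3 ∧ u ≠ v then χ u else 0))
        = -(∑ u : ZMod p, (if u * u = x ^ 3 then χ u else 0)) := by
    intro x hx
    have split : ∀ u v : ZMod p, (if u * v = x ^ 3 ∧ u ≠ v then χ u else 0)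
        = (if u * v = x ^ 3 then χ u else 0) - (if u * v = x ^ 3 ∧ u = v then χ u else 0) := by
      intro u v
      by_cases hh1 : u * v = x ^ 3 <;> by_cases hh2 : u = v <;> simp [hh1, hh2]
    simp only [split, Finset.sum_sub_distrib]
    have hA : ∑ u : ZMod p, ∑ v : ZMod p, (if u * v = x ^ 3 then χ u else 0) = 0 := by
      have hrow : ∀ u : ZMod p, (∑ v : ZMod p, (if u * v = x ^ 3 then χ u else 0)) = χ u := by
        intro u
        by_cases hu : u = 0
        · subst hu
          simp only [zero_mul, MulChar.map_zero]
          simp [(show (0 : ZMod p) ≠ x ^ 3 from fun h => hx (by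
            have := pow_eq_zero_iff (n := 3) (by norm_num) |>.mp h.symm
            exact this))]
        · have hcond : ∀ v : ZMod p, (u * v = x ^ 3) ↔ (v = u⁻¹ * x ^ 3) := by
            intro v
            constructor
            · intro h; rw [← h]; field_simp
            · intro h; rw [h]; field_simp
          rw [Finset.sum_congr rfl fun v _ => if_congr (hcond v) rfl rfl]
          simp
      rw [Finset.sum_congr rfl fun u _ => hrow u]
      exact MulChar.sum_eq_zero_of_ne_one hχ1
    have hB : ∀ u : ZMod p,
        (∑ v : ZMod p, (if u * v = x ^ 3 ∧ u = v then χ u else 0))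
          = (if u * u = x ^ 3 then χ u else 0) := by
      intro u
      have hcond : ∀ v : ZMod p, (u * v = x ^ 3 ∧ u = v) ↔ (v = u ∧ u * u = x ^ 3) := by
        intro v
        constructor
        · rintro ⟨hh1, rfl⟩; exact ⟨rfl, hh1⟩
        · rintro ⟨rfl, hh2⟩; exact ⟨hh2, rfl⟩
      rw [Finset.sum_congr rfl fun v _ => if_congr (hcond v) rfl rfl]
      simp only [ite_and]
      simp
    rw [hA, Finset.sum_congr rfl fun u _ => hB u, zero_sub]
  -- Step 3 : evaluate B(x)
  have B_eval : ∀ x : ZMod p, x ≠ 0 →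
      (∑ u : ZMod p, (if u * u = x ^ 3 then χ u else 0))
        = (if IsSquare x then (2 : ℂ) else 0) := by
    intro x hx
    by_cases hsq : IsSquare x
    · obtain ⟨w, hw⟩ := hsq
      have hw0 : w ≠ 0 := by
        rintro rfl
        exact hx (by rw [hw, mul_zero])
      have hw3 : w ^ 3 ≠ 0 := pow_ne_zero _ hw0
      have hne : w ^ 3 ≠ -w ^ 3 := by
        intro h
        have h' : (2 : ZMod p) * w ^ 3 = 0 := by linear_combination h
        exact hw3 ((mul_eq_zero.mp h').resolve_left h2)
      have hcond : ∀ u : ZMod p, (u * u = x ^ 3) ↔ (u = w ^ 3 ∨ u = -w ^ 3) := by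
        intro u
        constructor
        · intro h
          have h' : (u - w ^ 3) * (u + w ^ 3) = 0 := by
            linear_combination h + (x ^ 2 + x * (w * w) + (w * w) ^ 2) * hw
          rcases mul_eq_zero.mp h' with h'' | h''
          · exact Or.inl (sub_eq_zero.mp h'')
          · exact Or.inr (eq_neg_of_add_eq_zero_left h'')
        · rintro (rfl | rfl) <;>
            linear_combination -(x ^ 2 + x * (w * w) + (w * w) ^ 2) * hw
      rw [if_pos ⟨w, hw⟩]
      rw [Finset.sum_congr rfl fun u _ => if_congr (hcond u) rfl rfl]
      rw [← Finset.sum_filter]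
      have hfil : univ.filter (fun u : ZMod p => u = w ^ 3 ∨ u = -w ^ 3)
          = ({w ^ 3, -w ^ 3} : Finset (ZMod p)) := by
        ext u
        simp
      rw [hfil, Finset.sum_pair hne]
      have e1 : χ (w ^ 3) = 1 := by rw [map_pow]; exact hcube w hw0
      have e2 : χ (-w ^ 3) = 1 := by
        rw [show -w ^ 3 = -1 * w ^ 3 by ring, map_mul, hχneg1, one_mul, map_pow]
        exact hcube w hw0
      rw [e1, e2]
      norm_num
    · rw [if_neg hsq]
      refine Finset.sum_eq_zero fun u _ => ?_
      rw [if_neg]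
      intro h
      refine hsq ⟨u * x⁻¹, ?_⟩
      have hxx : x * x⁻¹ = 1 := mul_inv_cancel₀ hx
      calc x = x * (x * x⁻¹) * (x * x⁻¹) := by rw [hxx]; ring
        _ = x ^ 3 * (x⁻¹ * x⁻¹) := by ring
        _ = u * u * (x⁻¹ * x⁻¹) := by rw [h]
        _ = u * x⁻¹ * (u * x⁻¹) := by ring
  -- Step 4 : assemble
  set Q : Finset (ZMod p) := univ.filter (fun x : ZMod p => IsSquare x ∧ x ≠ 0) with hQ
  have key : (∑ z ∈ univ.filter (fun z : ZMod p => z ≠ 0),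
          ∑ P ∈ univ.filter
              (fun P : ZMod p × ZMod p => P.2 ^ 2 = P.1 ^ 3 - 27 * z ^ 2),
            (P.1.val : ℂ) * χ (P.2 - β * z))
      = -2 * ∑ x ∈ Q, (x.val : ℂ) := by
    rw [step1]
    have hterm : ∀ x : ZMod p, (x.val : ℂ) *
        (∑ u : ZMod p, ∑ v : ZMod p, (if u * v = x ^ 3 ∧ u ≠ v then χ u else 0))
        = (if IsSquare x ∧ x ≠ 0 then (-2 : ℂ) * (x.val : ℂ) else 0) := by
      intro x
      by_cases hx : x = 0
      · subst hx
        simp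
      · rw [inner_eval x hx, B_eval x hx]
        by_cases hsq : IsSquare x
        · rw [if_pos hsq, if_pos ⟨hsq, hx⟩]; ring
        · rw [if_neg hsq, if_neg (by tauto)]; ring
    rw [Finset.sum_congr rfl fun x _ => hterm x]
    rw [← Finset.sum_filter, ← hQ, Finset.mul_sum]
  -- divisibility
  have hQsum : (∑ x ∈ Q, x) = (0 : ZMod p) := by
    have h4 : (4 : ZMod p) ≠ 0 := by
      have h : (4 : ZMod p) = 2 ^ 2 := by norm_num
      rw [h]; exact pow_ne_zero _ h2
    have hbij : (∑ x ∈ Q, (4 : ZMod p) * x) = ∑ x ∈ Q, x := by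
      refine Finset.sum_nbij' (fun x => (4 : ZMod p) * x) (fun y => (4 : ZMod p)⁻¹ * y)
        ?_ ?_ ?_ ?_ ?_
      · intro a ha
        rw [hQ, mem_filter] at ha ⊢
        exact ⟨mem_univ _, ⟨(show IsSquare (4 : ZMod p) from ⟨2, by norm_num⟩).mul ha.2.1,
          mul_ne_zero h4 ha.2.2⟩⟩
      · intro a ha
        rw [hQ, mem_filter] at ha ⊢
        refine ⟨mem_univ _, ⟨?_, mul_ne_zero (inv_ne_zero h4) ha.2.2⟩⟩
        refine (show IsSquare ((4 : ZMod p)⁻¹) from ⟨2⁻¹, ?_⟩).mul ha.2.1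
        rw [← mul_inv]; norm_num
      · intro a _
        show (4 : ZMod p)⁻¹ * ((4 : ZMod p) * a) = a
        rw [← mul_assoc, inv_mul_cancel₀ h4, one_mul]
      · intro a _
        show (4 : ZMod p) * ((4 : ZMod p)⁻¹ * a) = a
        rw [← mul_assoc, mul_inv_cancel₀ h4, one_mul]
      · intro a _
        rfl
    rw [← Finset.mul_sum] at hbij
    have h3T : (3 : ZMod p) * ∑ x ∈ Q, x = 0 := by linear_combination hbij
    exact (mul_eq_zero.mp h3T).resolve_left h3
  have hNdvd : p ∣ (∑ x ∈ Q, x.val) := by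
    rw [← ZMod.natCast_eq_zero_iff]
    push_cast
    rw [Finset.sum_congr rfl fun x _ => ZMod.natCast_zmod_val x]
    exact hQsum
  obtain ⟨k, hk⟩ := hNdvd
  refine ⟨-(2 * k), ?_⟩
  rw [key]
  have hcast : (∑ x ∈ Q, (x.val : ℂ)) = ((∑ x ∈ Q, x.val : ℕ) : ℂ) := by push_cast; rfl
  rw [hcast, hk]
  push_cast
  ring
end

section
/- Let p be a prime with p ≡ 1 (mod 3), let d ∈ F_p be a nonzero square, and let α ∈ F_p satisfy α² = −3d. Let χ : F_p → ℂ be a multiplicative character of order 3 (extended by χ(0) = 0). Then the fiberwise character sum S_d = ∑_{(x,y) ∈ F_p × F_p with y² = x³ − 27d} {x}·χ(y − 3α) is a rational integer divisible by p; that is, there exists m ∈ ℤ with S_d = p·m. -/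
open Finset

/-! On each fiber `x³ = y² + 27d` the sum of the lifts `{x}` is `≡ ∑ x = 0 (mod p)`, since the
fiber is stable under multiplication by a nontrivial cube root of unity of `F_p`. So `S = p·T`
with `T` an integer combination of cube roots of unity, i.e. `T ∈ ℤ + ℤζ₃`. On the curve
`(y - 3α)(-y - 3α) = (-x)³`, so `conj χ(y - 3α) = χ(-y - 3α)` and the symmetry `y ↦ -y` shows
that `S`, hence `T`, is real; a real element of `ℤ + ℤζ₃` is an integer. -/

noncomputable def cubeRootOfUnity : ℂ := ⟨-1 / 2, √3 / 2⟩

def eisensteinLattice : AddSubgroup ℂ := AddSubgroup.closure {1, cubeRootOfUnity}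

lemma cubeRootOfUnity_sq_add_self_add_one : cubeRootOfUnity ^ 2 + cubeRootOfUnity + 1 = 0 := by
  have h3 : √3 ^ 2 = 3 := Real.sq_sqrt (by norm_num)
  apply Complex.ext <;> simp [cubeRootOfUnity, sq] <;> nlinarith

lemma cubeRootOfUnity_im_ne_zero : cubeRootOfUnity.im ≠ 0 := by
  simp [cubeRootOfUnity]

lemma mem_eisensteinLattice_of_pow_three_eq_one {z : ℂ} (hz : z ^ 3 = 1) :
    z ∈ eisensteinLattice := by
  have hroots : (z - 1) * (z - cubeRootOfUnity) * (z - (-1 - cubeRootOfUnity)) = 0 := by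
    linear_combination hz + (1 - z) * cubeRootOfUnity_sq_add_self_add_one
  have h1 : (1 : ℂ) ∈ eisensteinLattice := AddSubgroup.subset_closure (by simp)
  have hω : cubeRootOfUnity ∈ eisensteinLattice := AddSubgroup.subset_closure (by simp)
  rcases mul_eq_zero.1 hroots with h | h
  · rcases mul_eq_zero.1 h with h | h
    · rw [sub_eq_zero.1 h]; exact h1
    · rw [sub_eq_zero.1 h]; exact hω
  · rw [sub_eq_zero.1 h]; exact sub_mem (neg_mem h1) hω

lemma exists_intCast_eq_of_mem_eisensteinLattice {z : ℂ} (hz : z ∈ eisensteinLattice)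
    (him : z.im = 0) : ∃ m : ℤ, z = m := by
  obtain ⟨a, b, rfl⟩ := AddSubgroup.mem_closure_pair.1 hz
  have hb : b = 0 := by simpa [cubeRootOfUnity_im_ne_zero] using him
  exact ⟨a, by simp [hb]⟩

lemma MulChar.apply_mem_eisensteinLattice {R : Type*} [CommMonoidWithZero R]
    {χ : MulChar R ℂ} (hχ : χ ^ 3 = 1) (a : R) : χ a ∈ eisensteinLattice := by
  by_cases ha : IsUnit a
  · obtain ⟨u, rfl⟩ := ha
    apply mem_eisensteinLattice_of_pow_three_eq_one
    rw [← MulChar.pow_apply_coe, hχ, MulChar.one_apply_coe]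
  · rw [χ.map_nonunit ha]
    exact zero_mem _

lemma MulChar.conj_apply_eq_of_mul_eq_pow {R : Type*} [CommRing R] [Finite Rˣ]
    {χ : MulChar R ℂ} {n : ℕ} (hχ : χ ^ n = 1) {a b x : R} (hx : IsUnit x)
    (hab : a * b = x ^ n) : starRingEnd ℂ (χ a) = χ b := by
  obtain ⟨u, rfl⟩ := hx
  have hmul : χ a * χ b = 1 := by
    rw [← map_mul, hab, map_pow, ← MulChar.pow_apply_coe, hχ, MulChar.one_apply_coe]
  rw [← RCLike.star_def, MulChar.star_apply', MulChar.inv_apply_eq_inv',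
    inv_eq_of_mul_eq_one_right hmul]

lemma sum_filter_pow_eq_eq_zero {F : Type*} [Field F] [Fintype F] [DecidableEq F] {n : ℕ}
    (hn : n ≠ 0) {ω : F} (hω : ω ^ n = 1) (hω1 : ω ≠ 1) (c : F) :
    ∑ x ∈ univ.filter (· ^ n = c), x = 0 := by
  have hω0 : ω ≠ 0 := by rintro rfl; simp [hn] at hω
  have hinv : ω * ∑ x ∈ univ.filter (· ^ n = c), x = ∑ x ∈ univ.filter (· ^ n = c), x := by
    simp only [sum_filter, mul_sum, mul_ite, mul_zero]
    refine Fintype.sum_equiv (Equiv.mulLeft₀ ω hω0) _ _ fun x => ?_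
    simp [mul_pow, hω]
  have hker : (ω - 1) * ∑ x ∈ univ.filter (· ^ n = c), x = 0 := by rw [sub_mul, hinv]; ring
  exact (mul_eq_zero.1 hker).resolve_left (sub_ne_zero.2 hω1)

lemma FiniteField.exists_pow_eq_one_ne_one {F : Type*} [Field F] [Fintype F] {q : ℕ}
    [Fact q.Prime] (hq : q ∣ Fintype.card F - 1) : ∃ ω : F, ω ^ q = 1 ∧ ω ≠ 1 := by
  classical
  rw [← Fintype.card_units] at hq
  obtain ⟨u, hu⟩ := exists_prime_orderOf_dvd_card q hq
  refine ⟨u, by rw [← Units.val_pow_eq_pow_val, ← hu, pow_orderOf_eq_one, Units.val_one], ?_⟩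
  rintro h
  rw [Units.val_eq_one.1 h, orderOf_one] at hu
  exact (Fact.out : q.Prime).one_lt.ne hu

lemma ZMod.prime_dvd_sum_val_filter_pow_three_eq {p : ℕ} [Fact p.Prime] (hp3 : p % 3 = 1)
    (c : ZMod p) : p ∣ ∑ x ∈ univ.filter (· ^ 3 = c), x.val := by
  have : Fact (Nat.Prime 3) := ⟨Nat.prime_three⟩
  obtain ⟨ω, hω, hω1⟩ := FiniteField.exists_pow_eq_one_ne_one (F := ZMod p) (q := 3)
    (by rw [ZMod.card]; omega)
  rw [← ZMod.natCast_eq_zero_iff, Nat.cast_sum]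
  simp only [ZMod.natCast_val, ZMod.cast_id', id]
  exact sum_filter_pow_eq_eq_zero three_ne_zero hω hω1 c

lemma sum_filter_curve_eq_sum_fiber {F K : Type*} [CommRing F] [Fintype F] [DecidableEq F]
    [Semiring K] (c : F) (f g : F → K) :
    ∑ P ∈ univ.filter (fun P : F × F => P.2 ^ 2 = P.1 ^ 3 - c), f P.1 * g P.2
      = ∑ y, (∑ x ∈ univ.filter (· ^ 3 = y ^ 2 + c), f x) * g y := by
  rw [sum_filter, Fintype.sum_prod_type, sum_comm]
  refine sum_congr rfl fun y _ => ?_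
  rw [sum_filter, sum_mul]
  refine sum_congr rfl fun x _ => ?_
  rw [ite_mul, zero_mul]
  exact if_congr (eq_sub_iff_add_eq.trans eq_comm) rfl rfl

lemma conj_sum_curve_eq {p : ℕ} [Fact p.Prime] {d α : ZMod p} (hα : α ^ 2 = -3 * d)
    {χ : MulChar (ZMod p) ℂ} (hχ : χ ^ 3 = 1) :
    starRingEnd ℂ (∑ P ∈ univ.filter (fun P : ZMod p × ZMod p => P.2 ^ 2 = P.1 ^ 3 - 27 * d),
        (P.1.val : ℂ) * χ (P.2 - 3 * α))
      = ∑ P ∈ univ.filter (fun P : ZMod p × ZMod p => P.2 ^ 2 = P.1 ^ 3 - 27 * d),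
        (P.1.val : ℂ) * χ (P.2 - 3 * α) := by
  rw [map_sum]
  refine sum_equiv (.prodCongr (.refl _) (.neg _)) (fun P => by simp) fun ⟨x, y⟩ hP => ?_
  rw [mem_filter] at hP
  rw [map_mul, map_natCast]
  by_cases hx : x = 0
  · simp [hx]
  · have hfactor : (y - 3 * α) * (-y - 3 * α) = (-x) ^ 3 := by
      linear_combination -hP.2 + 9 * hα
    simp [MulChar.conj_apply_eq_of_mul_eq_pow hχ (neg_ne_zero.2 hx).isUnit hfactor]

theorem fiber_sum_divisible_by_p_general
    (p : ℕ) [Fact p.Prime] (hp3 : p % 3 = 1)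
    (d : ZMod p)
    (α : ZMod p) (hα : α ^ 2 = -3 * d)
    (χ : MulChar (ZMod p) ℂ) (hχ : orderOf χ = 3) :
    ∃ m : ℤ,
      (∑ P ∈ univ.filter
          (fun P : ZMod p × ZMod p => P.2 ^ 2 = P.1 ^ 3 - 27 * d),
        (P.1.val : ℂ) * χ (P.2 - 3 * α))
        = (p : ℂ) * (m : ℂ) := by
  have hχ3 : χ ^ 3 = 1 := hχ ▸ pow_orderOf_eq_one χ
  choose k hk using fun y : ZMod p =>
    ZMod.prime_dvd_sum_val_filter_pow_three_eq hp3 (y ^ 2 + 27 * d)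
  set S := ∑ P ∈ univ.filter (fun P : ZMod p × ZMod p => P.2 ^ 2 = P.1 ^ 3 - 27 * d),
    (P.1.val : ℂ) * χ (P.2 - 3 * α)
  set T := ∑ y, (k y : ℂ) * χ (y - 3 * α)
  have hST : S = p * T := by
    simp only [S, T]
    rw [sum_filter_curve_eq_sum_fiber _ (fun x => (x.val : ℂ)) (fun y => χ (y - 3 * α)), mul_sum]
    refine sum_congr rfl fun y _ => ?_
    rw [← Nat.cast_sum, hk, Nat.cast_mul, mul_assoc]
  have hT : T ∈ eisensteinLattice :=
    sum_mem fun y _ => by simpa using nsmul_mem (χ.apply_mem_eisensteinLattice hχ3 _) (k y)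
  have hTim : T.im = 0 := by
    have hS : S.im = 0 := Complex.conj_eq_iff_im.1 (conj_sum_curve_eq hα hχ3)
    simpa [hST, (Fact.out : p.Prime).ne_zero] using hS
  obtain ⟨m, hm⟩ := exists_intCast_eq_of_mem_eisensteinLattice hT hTim
  exact ⟨m, hm ▸ hST⟩

/-- Let `p ≡ 1 (mod 3)` be prime, `d` a nonzero square in `F_p`, `α² = -3d`,
and `χ` a multiplicative character of order 3 on `F_p` (valued in `ℂ`,
extended by `χ 0 = 0`). Then the fiberwise character sum over the affine
points of `y² = x³ - 27d` is a rational integer divisible by `p`. -/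
theorem fiber_sum_divisible_by_p
    (p : ℕ) [Fact p.Prime] (hp3 : p % 3 = 1)
    (d : ZMod p) (hd : d ≠ 0) (hdsq : IsSquare d)
    (α : ZMod p) (hα : α ^ 2 = -3 * d)
    (χ : MulChar (ZMod p) ℂ) (hχ : orderOf χ = 3) :
    ∃ m : ℤ,
      (∑ P ∈ univ.filter
          (fun P : ZMod p × ZMod p => P.2 ^ 2 = P.1 ^ 3 - 27 * d),
        (P.1.val : ℂ) * χ (P.2 - 3 * α))
        = (p : ℂ) * (m : ℂ) :=
  fiber_sum_divisible_by_p_general p hp3 d α hα χ hχ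
end

section
/- Let p > 3 be a prime, let d ∈ F_p, let α ∈ F_p satisfy α² = −3d, and let x, y ∈ F_p with x ≠ 0 and y² = x³ + d. Then y·(x³ − 8d)/x³ − 3α = ((y − α)/x)³. (This is the identity f_T ∘ τ_d = g_T³ for f_T = Y − 3α and g_T = (Y − α)/X on the curve y² = x³ + d.) -/
theorem sub_pow_three_eq_of_sq_eq_cube_add {R : Type*} [CommRing R] {d α x y : R}
    (hα : α ^ 2 = -3 * d) (hy : y ^ 2 = x ^ 3 + d) :
    (y - α) ^ 3 = y * (x ^ 3 - 8 * d) - 3 * α * x ^ 3 := by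
  linear_combination (y - 3 * α) * hy + (3 * y - α) * hα

theorem fT_comp_tau_eq_gT_cubed_general
    (p : ℕ) [Fact p.Prime]
    (d α x y : ZMod p) (hα : α ^ 2 = -3 * d)
    (hx : x ≠ 0) (hy : y ^ 2 = x ^ 3 + d) :
    y * (x ^ 3 - 8 * d) / x ^ 3 - 3 * α = ((y - α) / x) ^ 3 := by
  have hx3 : x ^ 3 ≠ 0 := pow_ne_zero 3 hx
  rw [div_pow, sub_pow_three_eq_of_sq_eq_cube_add hα hy, eq_div_iff hx3, sub_mul,
    div_mul_cancel₀ _ hx3]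

/-- Let `p > 3` be prime, `d ∈ F_p`, `α² = -3d`, and `(x, y)` an affine point
of `y² = x³ + d` with `x ≠ 0`.  Then `f_T ∘ τ_d = g_T ³`, i.e.
`y(x³ - 8d)/x³ - 3α = ((y - α)/x)³`. -/
theorem fT_comp_tau_eq_gT_cubed
    (p : ℕ) [Fact p.Prime] (hp : 3 < p)
    (d α x y : ZMod p) (hα : α ^ 2 = -3 * d)
    (hx : x ≠ 0) (hy : y ^ 2 = x ^ 3 + d) :
    y * (x ^ 3 - 8 * d) / x ^ 3 - 3 * α = ((y - α) / x) ^ 3 :=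
  fT_comp_tau_eq_gT_cubed_general p d α x y hα hx hy
end

section
/- Let p be a prime with p ≡ 1 (mod 3), let d ∈ F_p be a nonzero square, and let α ∈ F_p satisfy α² = −3d. Then there exist x, y ∈ F_p with x ≠ 0, y² = x³ + d, (y² + 3d)/x² = 0 and y·(x³ − 8d)/x³ = 3α if and only if there exists δ ∈ F_p with δ³ = −4d. (That is, the point T = (0, 3α) on the curve y² = x³ − 27d lies in the image of the 3-isogeny τ_d if and only if −4d is a cube in F_p.) -/
/-- Let `p ≡ 1 (mod 3)` be prime, `d` a nonzero square in `F_p`, and `α² = -3d`.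
The point `T = (0, 3α)` on `y² = x³ - 27d` lies in the image of the 3-isogeny
`τ_d` if and only if `-4d` is a cube in `F_p`. -/
theorem T_in_image_iff_neg_four_d_is_cube
    (p : ℕ) [Fact p.Prime] (hp3 : p % 3 = 1)
    (d : ZMod p) (hd : d ≠ 0) (hdsq : IsSquare d)
    (α : ZMod p) (hα : α ^ 2 = -3 * d) :
    (∃ x y : ZMod p, x ≠ 0 ∧ y ^ 2 = x ^ 3 + d ∧
        (y ^ 2 + 3 * d) / x ^ 2 = 0 ∧ y * (x ^ 3 - 8 * d) / x ^ 3 = 3 * α)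
      ↔ ∃ δ : ZMod p, δ ^ 3 = -4 * d := by
  have hp : p.Prime := Fact.out
  have hp2 : p ≠ 2 := by rintro rfl; simp at hp3
  have hpn3 : p ≠ 3 := by rintro rfl; simp at hp3
  have h2 : (2 : ZMod p) ≠ 0 := by
    intro h
    have : p ∣ 2 := (CharP.cast_eq_zero_iff (ZMod p) p 2).mp (by exact_mod_cast h)
    exact hp2 ((Nat.prime_dvd_prime_iff_eq hp (by norm_num)).mp this)
  have h4 : (4 : ZMod p) ≠ 0 := by
    have : (4 : ZMod p) = 2 * 2 := by norm_num
    rw [this]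
    exact mul_ne_zero h2 h2
  have h4d : (-4 : ZMod p) * d ≠ 0 := by
    intro h
    rcases mul_eq_zero.mp h with h' | h'
    · exact h4 (by linear_combination -h')
    · exact hd h'
  constructor
  · rintro ⟨x, y, hx, h1, hdiv, -⟩
    refine ⟨x, ?_⟩
    have hx2 : x ^ 2 ≠ 0 := pow_ne_zero _ hx
    have hnum : y ^ 2 + 3 * d = 0 := by
      rcases div_eq_zero_iff.mp hdiv with h | h
      · exact h
      · exact absurd h hx2
    linear_combination hnum - h1
  · rintro ⟨δ, hδ⟩
    have hδ0 : δ ≠ 0 := by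
      intro h
      apply h4d
      rw [← hδ, h]; ring
    refine ⟨δ, α, hδ0, ?_, ?_, ?_⟩
    · rw [hδ]; linear_combination hα
    · have : α ^ 2 + 3 * d = 0 := by linear_combination hα
      rw [this, zero_div]
    · rw [div_eq_iff (pow_ne_zero 3 hδ0)]
      linear_combination (-2 * α) * hδ
end

section
/- Let p be an odd prime and let x ∈ F_p be nonzero. Then the number of y ∈ F_p for which y² − x³ is a nonzero square in F_p equals (p−1)/2 if x is not a square in F_p, and equals (p−3)/2 if x is a square in F_p. -/
/-!
For `c ≠ 0` the conic `y² - z² = c` over `𝔽_q` has `q - 1` points: they are parametrised by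
`u = y + z ≠ 0`, with `y - z = c / u`. Over a fixed `y` it has one point if `y² = c`, two if
`y² - c` is a nonzero square and none otherwise. Hence `#{y | y² = c} + 2 N = q - 1`, where `N`
counts the `y` with `y² - c` a nonzero square; take `c = x³`, a square exactly when `x` is.
-/

open Finset

theorem Odd.isSquare_pow_iff {G : Type*} [CommGroupWithZero G] {n : ℕ} (hn : Odd n) (x : G) :
    IsSquare (x ^ n) ↔ IsSquare x := by
  obtain ⟨k, rfl⟩ := hn
  refine ⟨fun h => ?_, fun h => h.pow _⟩
  rcases eq_or_ne x 0 with rfl | hx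
  · exact IsSquare.zero
  · have hsplit : x = x ^ (2 * k + 1) / (x ^ k * x ^ k) := by
      rw [eq_div_iff (by simp [hx]), ← pow_add, ← pow_succ', two_mul]
    rw [hsplit]
    exact h.div (IsSquare.mul_self _)

section
variable {F : Type*} [Field F] [Fintype F] [DecidableEq F]

theorem card_filter_sq_eq_of_ne_zero (hF : ringChar F ≠ 2) {a : F} (ha : a ≠ 0) :
    #{z : F | z ^ 2 = a} = if IsSquare a then 2 else 0 := by
  split_ifs with h
  · obtain ⟨b, rfl⟩ := h
    have hb : b ≠ -b := fun h => by
      simp_all [(Ring.eq_self_iff_eq_zero_of_char_ne_two hF).mp h.symm]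
    convert card_pair hb using 2
    ext z
    simp [← sq, sq_eq_sq_iff_eq_or_eq_neg]
  · rw [card_eq_zero, filter_eq_empty_iff]
    rintro z - rfl
    exact h (.sq z)

theorem card_filter_sq_sub_sq_eq (hF : ringChar F ≠ 2) {c : F} (hc : c ≠ 0) :
    #{w : F × F | w.1 ^ 2 - w.2 ^ 2 = c} = Fintype.card F - 1 := by
  have h2 : (2 : F) ≠ 0 := Ring.two_ne_zero hF
  rw [← card_univ, ← card_erase_of_mem (mem_univ 0), ← filter_ne']
  refine card_nbij' (fun w => w.1 + w.2) (fun u => ((u + c / u) / 2, (u - c / u) / 2))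
    ?_ ?_ ?_ ?_
  · intro w hw
    simp only [coe_filter, mem_univ, true_and, Set.mem_ofPred_eq] at hw ⊢
    intro h
    apply hc
    rw [← hw]
    linear_combination (w.1 - w.2) * h
  · intro u hu
    simp only [coe_filter, mem_univ, true_and, Set.mem_ofPred_eq] at hu ⊢
    field_simp
    ring
  · intro w hw
    simp only [coe_filter, mem_univ, true_and, Set.mem_ofPred_eq] at hw
    have hu : w.1 + w.2 ≠ 0 := fun h => hc (by rw [← hw]; linear_combination (w.1 - w.2) * h)
    have hv : c / (w.1 + w.2) = w.1 - w.2 := by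
      rw [div_eq_iff hu, ← hw]
      ring
    ext <;> simp only [hv] <;> field_simp <;> ring
  · intro u hu
    simp only [coe_filter, mem_univ, true_and, Set.mem_ofPred_eq] at hu
    field_simp
    ring

theorem card_filter_prod_eq_sum {α β : Type*} [Fintype α] [Fintype β] (P : α × β → Prop)
    [DecidablePred P] :
    #{w | P w} = ∑ a, #{b | P (a, b)} := by
  simp only [card_filter, Fintype.sum_prod_type]

theorem card_filter_sq_eq_add_two_mul_card_filter_isSquare (hF : ringChar F ≠ 2) {c : F}
    (hc : c ≠ 0) :
    #{y : F | y ^ 2 = c} + 2 * #{y : F | y ^ 2 - c ≠ 0 ∧ IsSquare (y ^ 2 - c)} =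
      Fintype.card F - 1 := by
  rw [← card_filter_sq_sub_sq_eq hF hc, card_filter_prod_eq_sum, card_filter, card_filter,
    mul_sum, ← sum_add_distrib]
  refine sum_congr rfl fun y _ => ?_
  have hfib : #{z : F | y ^ 2 - z ^ 2 = c} = #{z : F | z ^ 2 = y ^ 2 - c} := by
    congr 1
    ext z
    simp only [mem_filter, mem_univ, true_and]
    constructor <;> intro h <;> linear_combination -h
  rw [hfib]
  rcases eq_or_ne (y ^ 2 - c) 0 with h | h
  · simp [filter_eq', sub_eq_zero.mp h]
  · rw [card_filter_sq_eq_of_ne_zero hF h]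
    simp [h, sub_ne_zero.mp h]

end

/-- Let `p` be an odd prime and `x ∈ F_p` nonzero.  The number of `y ∈ F_p`
for which `y² - x³` is a nonzero square equals `(p-1)/2` if `x` is not a
square, and `(p-3)/2` if `x` is a square. -/
theorem count_y_sq_sub_x_cubed_nonzero_square
    (p : ℕ) [Fact p.Prime] (hp : p ≠ 2)
    (x : ZMod p) (hx : x ≠ 0) :
    (univ.filter (fun y : ZMod p =>
        y ^ 2 - x ^ 3 ≠ 0 ∧ IsSquare (y ^ 2 - x ^ 3))).card
      = if IsSquare x then (p - 3) / 2 else (p - 1) / 2 := by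
  have hF : ringChar (ZMod p) ≠ 2 := by rwa [ZMod.ringChar_zmod_n]
  have hx3 : x ^ 3 ≠ 0 := pow_ne_zero 3 hx
  have key := card_filter_sq_eq_add_two_mul_card_filter_isSquare hF hx3
  rw [card_filter_sq_eq_of_ne_zero hF hx3, ZMod.card] at key
  simp only [Odd.isSquare_pow_iff (by decide : Odd 3)] at key
  split_ifs at key ⊢ <;> omega
end

section
/- Let p be a prime with p ≡ 1 (mod 3), let β ∈ F_p satisfy β² = −27, let χ : F_p → ℂ be a multiplicative character of order 3 (extended by χ(0) = 0), and let x ∈ F_p be nonzero. Then ∑_{y ∈ F_p} ∑_{z ∈ F_p, z ≠ 0, y² = x³ − 27z²} χ(y − βz) = −1 − (x/p), where (x/p) is the Legendre symbol of x modulo p (viewed in ℂ). -/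
/-!
Since `β² = -27`, the curve `y² = x³ - 27z²` is the hyperbola `(y - βz)(y + βz) = x³`, and
`u = y - βz` parametrizes its points with `z ≠ 0` bijectively by the `u ≠ 0` with `u² ≠ x³`.
As `χ` is nontrivial, the sum of `χ` over these `u` is minus its sum over the square roots of
`x³`; each such root has `χ u = 1` (as `χ u² = χ x³ = 1` and `χ u³ = 1`), and there are
`1 + (x/p)` of them.
-/

open Finset

section Hyperbola

variable {F M : Type*} [Field F] [Fintype F] [DecidableEq F] [AddCommMonoid M]

theorem sum_sq_sub_sq_eq_sum_mul_eq (f : F → M) {β c : F} (h2 : (2 : F) ≠ 0) (hβ : β ≠ 0) :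
    ∑ a ∈ univ.filter (fun a : F × F => a.2 ≠ 0 ∧ a.1 ^ 2 - β ^ 2 * a.2 ^ 2 = c),
        f (a.1 - β * a.2)
      = ∑ a ∈ univ.filter (fun a : F × F => a.1 ≠ a.2 ∧ a.1 * a.2 = c), f a.1 := by
  have h2β : 2 * β ≠ 0 := mul_ne_zero h2 hβ
  apply sum_nbij' (fun a => (a.1 - β * a.2, a.1 + β * a.2))
    (fun b => ((b.1 + b.2) / 2, (b.2 - b.1) / (2 * β)))
  · rintro ⟨y, z⟩
    simp only [mem_filter, mem_univ, true_and]
    rintro ⟨hz, hc⟩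
    refine ⟨fun h => hz ?_, by linear_combination hc⟩
    simpa [h2β] using (show 2 * β * z = 0 by linear_combination -h)
  · rintro ⟨u, v⟩
    simp only [mem_filter, mem_univ, true_and]
    rintro ⟨huv, hc⟩
    refine ⟨?_, ?_⟩
    · rw [Ne, div_eq_zero_iff, not_or]
      exact ⟨sub_ne_zero.mpr (Ne.symm huv), h2β⟩
    · rw [← hc]
      field_simp
      ring
  · rintro ⟨y, z⟩ -
    ext <;> field_simp <;> ring
  · rintro ⟨u, v⟩ -
    ext <;> field_simp <;> ring
  · intro a _
    rfl

theorem sum_mul_eq_eq_sum_sq_ne (f : F → M) {c : F} (hc : c ≠ 0) :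
    ∑ a ∈ univ.filter (fun a : F × F => a.1 ≠ a.2 ∧ a.1 * a.2 = c), f a.1
      = ∑ u ∈ univ.filter (fun u : F => u ≠ 0 ∧ u ^ 2 ≠ c), f u := by
  apply sum_nbij' Prod.fst (fun u => (u, c / u))
  · rintro ⟨u, v⟩
    simp only [mem_filter, mem_univ, true_and]
    rintro ⟨huv, rfl⟩
    have hu : u ≠ 0 := left_ne_zero_of_mul hc
    exact ⟨hu, fun h => huv (mul_left_cancel₀ hu (by linear_combination h))⟩
  · intro u
    simp only [mem_filter, mem_univ, true_and]
    rintro ⟨hu, hsq⟩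
    refine ⟨fun h => hsq ?_, mul_div_cancel₀ c hu⟩
    rw [eq_div_iff hu] at h
    linear_combination h
  · rintro ⟨u, v⟩
    simp only [mem_filter, mem_univ, true_and]
    rintro ⟨-, rfl⟩
    have hu : u ≠ 0 := left_ne_zero_of_mul hc
    simp [hu]
  · intro u _
    rfl
  · intro a _
    rfl

end Hyperbola

namespace MulChar

variable {F R : Type*} [Field F] [Fintype F] [DecidableEq F] [CommRing R] [IsDomain R]

theorem sum_sq_ne_eq_neg_sum_sq_eq {χ : MulChar F R} (hχ : χ ≠ 1) (c : F) :
    ∑ u ∈ univ.filter (fun u : F => u ≠ 0 ∧ u ^ 2 ≠ c), χ u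
      = -∑ u ∈ univ.filter (fun u : F => u ^ 2 = c), χ u := by
  have hdrop : ∑ u ∈ univ.filter (fun u : F => u ≠ 0 ∧ u ^ 2 ≠ c), χ u
      = ∑ u ∈ univ.filter (fun u : F => u ^ 2 ≠ c), χ u := by
    refine sum_subset (fun u => by simp +contextual) fun u hu hu' => ?_
    simp_all
  rw [hdrop, eq_neg_iff_add_eq_zero, sum_filter_not_add_sum_filter, sum_eq_zero_of_ne_one hχ]

theorem apply_eq_one_of_sq_eq_pow_three {G R : Type*} [CommGroupWithZero G] [CommRing R]
    {χ : MulChar G R} (hχ : χ ^ 3 = 1) {u x : G}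
    (hx : x ≠ 0) (hux : u ^ 2 = x ^ 3) : χ u = 1 := by
  have hcube : ∀ a : G, a ≠ 0 → χ a ^ 3 = 1 := fun a ha => by
    rw [← pow_apply' χ three_ne_zero, hχ, one_apply (Ne.isUnit ha)]
  have hu : u ≠ 0 := by
    rintro rfl
    exact pow_ne_zero 3 hx (by simpa using hux.symm)
  have hsq : χ u ^ 2 = 1 := by rw [← map_pow, hux, map_pow, hcube x hx]
  linear_combination hcube u hu - χ u * hsq

end MulChar

theorem quadraticChar_pow_three {F : Type*} [Field F] [Fintype F] [DecidableEq F] {x : F}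
    (hx : x ≠ 0) : quadraticChar F (x ^ 3) = quadraticChar F x := by
  rw [pow_succ', map_mul, quadraticChar_sq_one' hx, mul_one]

theorem legendreSym_val_eq_quadraticChar {p : ℕ} [Fact p.Prime] (x : ZMod p) :
    legendreSym p x.val = quadraticChar (ZMod p) x := by
  simp [legendreSym]

/-- Let `p ≡ 1 (mod 3)` be prime, `β² = -27` in `F_p`, `χ` a multiplicative
character of order 3 on `F_p` (valued in `ℂ`, extended by `χ 0 = 0`), and
`x ∈ F_p` nonzero. Then
`∑_{y} ∑_{z ≠ 0, y² = x³ - 27z²} χ(y - βz) = -1 - (x/p)`,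
where `(x/p)` is the Legendre symbol. -/
theorem inner_double_sum_eq
    (p : ℕ) [Fact p.Prime] (hp3 : p % 3 = 1)
    (β : ZMod p) (hβ : β ^ 2 = -27)
    (χ : MulChar (ZMod p) ℂ) (hχ : orderOf χ = 3)
    (x : ZMod p) (hx : x ≠ 0) :
    (∑ y : ZMod p,
        ∑ z ∈ univ.filter
            (fun z : ZMod p => z ≠ 0 ∧ y ^ 2 = x ^ 3 - 27 * z ^ 2),
          χ (y - β * z))
      = -1 - (legendreSym p x.val : ℂ) := by
  have hchar : ringChar (ZMod p) ≠ 2 := by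
    rw [ZMod.ringChar_zmod_n]; omega
  have h3 : ((3 : ℕ) : ZMod p) ≠ 0 := by
    rw [Ne, ZMod.natCast_eq_zero_iff, Nat.prime_dvd_prime_iff_eq Fact.out Nat.prime_three]
    omega
  have hβ0 : β ≠ 0 := by
    rintro rfl
    exact pow_ne_zero 3 h3 (by push_cast; linear_combination hβ)
  have hχ1 : χ ≠ 1 := by
    rintro rfl
    simp at hχ
  have hχ3 : χ ^ 3 = 1 := hχ ▸ pow_orderOf_eq_one χ
  calc _ = ∑ a ∈ univ.filter
          (fun a : ZMod p × ZMod p => a.2 ≠ 0 ∧ a.1 ^ 2 - β ^ 2 * a.2 ^ 2 = x ^ 3),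
          χ (a.1 - β * a.2) := by
        have hcurve : ∀ y z : ZMod p,
            y ^ 2 = x ^ 3 - 27 * z ^ 2 ↔ y ^ 2 - β ^ 2 * z ^ 2 = x ^ 3 := fun y z => by
          rw [hβ]
          constructor <;> intro h <;> linear_combination h
        simp only [sum_filter, Fintype.sum_prod_type, hcurve]
    _ = ∑ u ∈ univ.filter (fun u : ZMod p => u ≠ 0 ∧ u ^ 2 ≠ x ^ 3), χ u := by
        rw [sum_sq_sub_sq_eq_sum_mul_eq _ (Ring.two_ne_zero hchar) hβ0,
          sum_mul_eq_eq_sum_sq_ne _ (pow_ne_zero 3 hx)]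
    _ = -∑ u ∈ univ.filter (fun u : ZMod p => u ^ 2 = x ^ 3), 1 := by
        rw [MulChar.sum_sq_ne_eq_neg_sum_sq_eq hχ1]
        congr 1
        exact sum_congr rfl fun u hu =>
          MulChar.apply_eq_one_of_sq_eq_pow_three hχ3 hx (mem_filter.mp hu).2
    _ = -1 - (legendreSym p x.val : ℂ) := by
        have hcard : (#(univ.filter fun u : ZMod p => u ^ 2 = x ^ 3) : ℤ)
            = quadraticChar (ZMod p) x + 1 := by
          rw [← quadraticChar_pow_three hx, ← quadraticChar_card_sqrts hchar]
          congr
          ext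
          simp
        rw [sum_const, nsmul_one, legendreSym_val_eq_quadraticChar, ← Int.cast_natCast, hcard]
        push_cast
        ring
end
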